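/- arXiv:1903.05380 — 4 statements merged into one kernel-verified Lean document; each statement's English description precedes it below -/
import Mathlib

section
/- Let Λ be a countably infinite set and let G be a closed subgroup of Sym(Λ). Then G has the small index property if and only if for every λ ∈ Λ the stabilizer G_λ = {g ∈ G : g(λ) = λ}, with the subspace topology, has the small index property. -/
/-- The topology of pointwise convergence on the permutation group of a discrete set. -/
instance permPointwiseTopology (Λ : Type*) : TopologicalSpace (Equiv.Perm Λ) :=
  TopologicalSpace.induced (fun σ : Equiv.Perm Λ => (σ : Λ → Λ))
    (@Pi.topologicalSpace Λ (fun _ => Λ) (fun _ => ⊥))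

/-- The small index property: every subgroup of index `< 2^ℵ₀` is open. -/
def SmallIndexProperty (G : Type*) [Group G] [TopologicalSpace G] : Prop :=
  ∀ H : Subgroup G, Cardinal.mk (G ⧸ H) < Cardinal.continuum → IsOpen (H : Set G)

/-- The stabilizer of a point in `Sym(Λ)`. -/
def permPtStab (Λ : Type*) (l : Λ) : Subgroup (Equiv.Perm Λ) where
  carrier := {σ | σ l = l}
  one_mem' := rfl
  mul_mem' := by
    intro a b ha hb
    show a (b l) = l
    rw [show b l = l from hb]; exact ha
  inv_mem' := by
    intro a ha
    show a⁻¹ l = l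
    exact Equiv.Perm.inv_eq_iff_eq.mpr (show l = a l from (ha : a l = l).symm)

/-- The stabilizer of a point in a subgroup `G ≤ Sym(Λ)`. -/
def permStab {Λ : Type*} (G : Subgroup (Equiv.Perm Λ)) (l : Λ) : Subgroup ↥G :=
  (permPtStab Λ l).comap G.subtype

/-!
A point stabilizer `G_l` is an open subgroup of `G`, and it has countable index because
`G ⧸ G_l` is in bijection with the orbit of `l`. Indices multiply, so a subgroup of small index
in `G_l` has small index in `G`. Conversely, if `H` has small index in `G`, then `H ∩ G_l` has
small index in `G_l`, hence is open in `G_l` and therefore in `G`; a subgroup containing an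
open subgroup is open.
-/

open Cardinal

theorem Subgroup.mk_quotient_subgroupOf_le {G : Type*} [Group G] (H K : Subgroup G) :
    #(K ⧸ H.subgroupOf K) ≤ #(G ⧸ H) := by
  refine mk_le_of_injective (f := Quotient.map' K.subtype fun a b hab => by
    rwa [QuotientGroup.leftRel_apply] at hab ⊢) ?_
  refine Quotient.ind₂' fun a b h => Quotient.sound' ?_
  have := Quotient.exact' h
  rwa [QuotientGroup.leftRel_apply] at this ⊢

instance Subgroup.separatelyContinuousMul {G : Type*} [Group G] [TopologicalSpace G]
    [SeparatelyContinuousMul G] (S : Subgroup G) : SeparatelyContinuousMul S :=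
  S.toSubmonoid.separatelyContinuousMul

namespace SmallIndexProperty

variable {G : Type*} [Group G] [TopologicalSpace G]

theorem subgroup (hG : SmallIndexProperty G) {K : Subgroup G} (hK : #(G ⧸ K) < 𝔠) :
    SmallIndexProperty K := by
  intro H hH
  have hcard : #(G ⧸ H.map K.subtype) < 𝔠 := by
    rw [mk_congr (Subgroup.quotientEquivProdOfLE (Subgroup.map_subtype_le H)), mk_prod, lift_id,
      lift_id, Subgroup.subgroupOf, Subgroup.comap_map_eq_self_of_injective K.subtype_injective]
    exact mul_lt_of_lt aleph0_le_continuum hK hH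
  have hpre : (H : Set K) = Subtype.val ⁻¹' (H.map K.subtype : Set G) :=
    (Set.preimage_image_eq _ Subtype.val_injective).symm
  rw [hpre]
  exact (hG _ hcard).preimage continuous_subtype_val

theorem of_isOpen_subgroup [SeparatelyContinuousMul G] {K : Subgroup G}
    (hKo : IsOpen (K : Set G)) (hK : SmallIndexProperty K) : SmallIndexProperty G := by
  intro H hH
  have hopen : IsOpen ((H.subgroupOf K).map K.subtype : Set G) :=
    hKo.isOpenMap_subtype_val _ (hK _ ((H.mk_quotient_subgroupOf_le K).trans_lt hH))
  rw [Subgroup.subgroupOf_map_subtype] at hopen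
  exact Subgroup.isOpen_mono inf_le_left hopen

end SmallIndexProperty

namespace Equiv.Perm

variable {Λ : Type*}

theorem isOpen_setOf_apply_eq (i j : Λ) : IsOpen {σ : Perm Λ | σ i = j} := by
  let : TopologicalSpace Λ := ⊥
  have : DiscreteTopology Λ := ⟨rfl⟩
  exact (isOpen_discrete {j}).preimage
    ((continuous_apply i).comp (continuous_induced_dom (f := fun σ : Perm Λ => (σ : Λ → Λ))))

instance : SeparatelyContinuousMul (Perm Λ) := by
  let : TopologicalSpace Λ := ⊥
  have : DiscreteTopology Λ := ⟨rfl⟩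
  refine ⟨fun {a} => ?_, fun {a} => ?_⟩ <;>
    refine continuous_induced_rng.2 (continuous_pi fun i => ?_)
  · exact continuous_of_discreteTopology.comp ((continuous_apply i).comp continuous_induced_dom)
  · exact (continuous_apply (a i)).comp continuous_induced_dom

end Equiv.Perm

theorem isOpen_permStab {Λ : Type*} (G : Subgroup (Equiv.Perm Λ)) (l : Λ) :
    IsOpen (permStab G l : Set G) :=
  (Equiv.Perm.isOpen_setOf_apply_eq l l).preimage continuous_subtype_val

theorem mk_quotient_permStab_le {Λ : Type*} (G : Subgroup (Equiv.Perm Λ)) (l : Λ) :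
    #(G ⧸ permStab G l) ≤ #Λ := by
  have hstab : permStab G l = MulAction.stabilizer G l := rfl
  rw [hstab, ← mk_congr (MulAction.orbitEquivQuotientStabilizer G l)]
  exact mk_set_le _

theorem smallIndexProperty_iff_stabilizers_general {Λ : Type*} [Countable Λ] [Infinite Λ]
    (G : Subgroup (Equiv.Perm Λ)) :
    SmallIndexProperty ↥G ↔ ∀ l : Λ, SmallIndexProperty ↥(permStab G l) := by
  refine ⟨fun hG l => hG.subgroup ?_, fun h => ?_⟩
  · exact ((mk_quotient_permStab_le G l).trans mk_le_aleph0).trans_lt aleph0_lt_continuum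
  · obtain ⟨l⟩ : Nonempty Λ := inferInstance
    exact .of_isOpen_subgroup (isOpen_permStab G l) (h l)

/-- A closed subgroup of `Sym(Λ)` has the small index property if and only if all its
point stabilizers do. -/
theorem smallIndexProperty_iff_stabilizers {Λ : Type*} [Countable Λ] [Infinite Λ]
    (G : Subgroup (Equiv.Perm Λ)) (hGclosed : IsClosed (G : Set (Equiv.Perm Λ))) :
    SmallIndexProperty ↥G ↔ ∀ l : Λ, SmallIndexProperty ↥(permStab G l) :=
  smallIndexProperty_iff_stabilizers_general G
end

section
/- Let G be a Polish group admitting a comeager conjugacy class. If N is a normal subgroup of G whose index (the cardinality of the coset space G/N) is strictly less than 2^{ℵ₀}, then N = G. -/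
/-!
The relation `a⁻¹ * b ∈ C`, for `C` the comeager conjugacy class, is comeager in `G × G`, so by
Mycielski's theorem there is a Cantor set of pairwise related points. Fewer than `𝔠` cosets
force two of them into the same coset of `N`, hence some element of `C` lies in `N`; by
normality `C ⊆ N`. A comeager subgroup of a Baire group is everything, since `N` and `x * N`
must meet.
-/

open Set Filter Topology Metric CantorScheme PiNat
open scoped ENNReal

section Refinement

variable {X Y : Type*} [TopologicalSpace X] [TopologicalSpace Y]

lemma exists_isOpen_prod_subset_of_dense {U : Set X} {V : Set Y} (hUo : IsOpen U)
    (hVo : IsOpen V) (hU : U.Nonempty) (hV : V.Nonempty) {D : Set (X × Y)} (hDo : IsOpen D)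
    (hDd : Dense D) :
    ∃ U' ⊆ U, ∃ V' ⊆ V, IsOpen U' ∧ U'.Nonempty ∧ IsOpen V' ∧ V'.Nonempty ∧ U' ×ˢ V' ⊆ D := by
  obtain ⟨z, hzUV, hzD⟩ := hDd.inter_open_nonempty _ (hUo.prod hVo) (hU.prod hV)
  obtain ⟨u, v, huo, hvo, hzu, hzv, huvD⟩ := isOpen_prod_iff.1 hDo z.1 z.2 hzD
  exact ⟨U ∩ u, inter_subset_left, V ∩ v, inter_subset_left, hUo.inter huo, ⟨z.1, hzUV.1, hzu⟩,
    hVo.inter hvo, ⟨z.2, hzUV.2, hzv⟩, (prod_mono inter_subset_right inter_subset_right).trans huvD⟩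

lemma exists_le_prod_subset_of_dense {ι : Type*} [DecidableEq ι] (W : ι → Set X)
    (hWo : ∀ i, IsOpen (W i)) (hW : ∀ i, (W i).Nonempty) {i j : ι} (hij : i ≠ j)
    {D : Set (X × X)} (hDo : IsOpen D) (hDd : Dense D) :
    ∃ W' ≤ W, (∀ k, IsOpen (W' k) ∧ (W' k).Nonempty) ∧ W' i ×ˢ W' j ⊆ D := by
  obtain ⟨U, hUW, V, hVW, hUo, hU, hVo, hV, hUV⟩ :=
    exists_isOpen_prod_subset_of_dense (hWo i) (hWo j) (hW i) (hW j) hDo hDd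
  refine ⟨Function.update (Function.update W i U) j V, fun k => ?_, fun k => ?_, ?_⟩
  · rcases eq_or_ne k j with rfl | hkj
    · simpa using hVW
    rcases eq_or_ne k i with rfl | hki
    · simpa [hkj] using hUW
    simp [hkj, hki]
  · rcases eq_or_ne k j with rfl | hkj
    · simpa using ⟨hVo, hV⟩
    rcases eq_or_ne k i with rfl | hki
    · simpa [hkj] using ⟨hUo, hU⟩
    simpa [hkj, hki] using ⟨hWo k, hW k⟩
  · simpa [hij] using hUV

lemma exists_le_pairwise_prod_subset_of_dense {ι : Type*} [Finite ι] (V : ι → Set X)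
    (hVo : ∀ i, IsOpen (V i)) (hV : ∀ i, (V i).Nonempty) {D : Set (X × X)} (hDo : IsOpen D)
    (hDd : Dense D) :
    ∃ W ≤ V, (∀ i, IsOpen (W i) ∧ (W i).Nonempty) ∧ Pairwise fun i j => W i ×ˢ W j ⊆ D := by
  classical
  have := Fintype.ofFinite ι
  suffices H : ∀ P : Finset (ι × ι), ∃ W ≤ V, (∀ i, IsOpen (W i) ∧ (W i).Nonempty) ∧
      ∀ p ∈ P, p.1 ≠ p.2 → W p.1 ×ˢ W p.2 ⊆ D by
    obtain ⟨W, hWV, hW, hWD⟩ := H Finset.univ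
    exact ⟨W, hWV, hW, fun i j hij => hWD (i, j) (Finset.mem_univ _) hij⟩
  intro P
  induction P using Finset.induction_on with
  | empty => exact ⟨V, le_rfl, fun i => ⟨hVo i, hV i⟩, by simp⟩
  | insert p P _ ih =>
    obtain ⟨W, hWV, hW, hWD⟩ := ih
    by_cases hp : p.1 = p.2
    · refine ⟨W, hWV, hW, fun q hq hq' => ?_⟩
      obtain rfl | hq := Finset.mem_insert.1 hq
      exacts [absurd hp hq', hWD q hq hq']
    obtain ⟨W', hW'W, hW', hW'D⟩ := exists_le_prod_subset_of_dense W (fun i => (hW i).1)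
      (fun i => (hW i).2) hp hDo hDd
    refine ⟨W', hW'W.trans hWV, hW', fun q hq hq' => ?_⟩
    obtain rfl | hq := Finset.mem_insert.1 hq
    exacts [hW'D, (prod_mono (hW'W q.1) (hW'W q.2)).trans (hWD q hq hq')]

end Refinement

lemma exists_isOpen_closure_subset_ediam_le {X : Type*} [PseudoEMetricSpace X] {U : Set X}
    (hUo : IsOpen U) (hU : U.Nonempty) {ε : ℝ≥0∞} (hε : 0 < ε) :
    ∃ V, IsOpen V ∧ V.Nonempty ∧ closure V ⊆ U ∧ ediam V ≤ ε := by
  obtain ⟨x, hx⟩ := hU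
  obtain ⟨δ, hδ, hδU⟩ := EMetric.isOpen_iff.1 hUo x hx
  obtain ⟨r, hr, hrδε⟩ := exists_between (lt_min hδ (ENNReal.half_pos hε.ne'))
  refine ⟨eball x r, isOpen_eball, ⟨x, mem_eball_self hr⟩, ?_, ?_⟩
  · calc closure (eball x r) ⊆ closedEBall x r :=
          closure_minimal eball_subset_closedEBall isClosed_closedEBall
      _ ⊆ eball x δ := fun y hy => lt_of_le_of_lt hy (hrδε.trans_le (min_le_left _ _))
      _ ⊆ U := hδU
  · calc ediam (eball x r) ≤ 2 * r := ediam_eball_le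
      _ ≤ 2 * (ε / 2) := by gcongr; exact hrδε.le.trans (min_le_right _ _)
      _ = ε := ENNReal.mul_div_cancel two_ne_zero ENNReal.ofNat_ne_top

lemma exists_refinement_pairwise_prod_subset {X ι κ : Type*} [PseudoEMetricSpace X] [Finite κ]
    (π : κ → ι) (F : ι → Set X) (hFo : ∀ i, IsOpen (F i)) (hF : ∀ i, (F i).Nonempty)
    {D : Set (X × X)} (hDo : IsOpen D) (hDd : Dense D) {ε : ℝ≥0∞} (hε : 0 < ε) :
    ∃ F' : κ → Set X, (∀ k, IsOpen (F' k) ∧ (F' k).Nonempty ∧ closure (F' k) ⊆ F (π k) ∧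
      ediam (F' k) ≤ ε) ∧ Pairwise fun k k' => F' k ×ˢ F' k' ⊆ D := by
  obtain ⟨W, hWF, hW, hWD⟩ := exists_le_pairwise_prod_subset_of_dense (F ∘ π)
    (fun k => hFo (π k)) (fun k => hF (π k)) hDo hDd
  choose F' hF'o hF' hF'W hF'ε using
    fun k => exists_isOpen_closure_subset_ediam_le (hW k).1 (hW k).2 hε
  refine ⟨F', fun k => ⟨hF'o k, hF' k, (hF'W k).trans (hWF k), hF'ε k⟩, fun k k' hkk' => ?_⟩
  exact (prod_mono (subset_closure.trans (hF'W k)) (subset_closure.trans (hF'W k'))).trans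
    (hWD hkk')

section Mycielski

variable {X : Type*} [PseudoMetricSpace X] {D : ℕ → Set (X × X)}
  (hDo : ∀ n, IsOpen (D n)) (hDd : ∀ n, Dense (D n))

noncomputable def mycielskiStep (n : ℕ)
    (F : {F : List.Vector Bool n → Set X // ∀ v, IsOpen (F v) ∧ (F v).Nonempty}) :
    {F' : List.Vector Bool (n + 1) → Set X // ∀ v, IsOpen (F' v) ∧ (F' v).Nonempty} :=
  have h := exists_refinement_pairwise_prod_subset (κ := List.Vector Bool (n + 1))
    List.Vector.tail F.1 (fun v => (F.2 v).1) (fun v => (F.2 v).2) (hDo n) (hDd n)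
    (ε := ((n + 1 : ℕ) : ℝ≥0∞)⁻¹) (by simp)
  ⟨h.choose, fun v => ⟨(h.choose_spec.1 v).1, (h.choose_spec.1 v).2.1⟩⟩

lemma mycielskiStep_spec (n : ℕ)
    (F : {F : List.Vector Bool n → Set X // ∀ v, IsOpen (F v) ∧ (F v).Nonempty}) :
    (∀ v, closure ((mycielskiStep hDo hDd n F).1 v) ⊆ F.1 v.tail ∧
      ediam ((mycielskiStep hDo hDd n F).1 v) ≤ ((n + 1 : ℕ) : ℝ≥0∞)⁻¹) ∧
    Pairwise fun v w =>
      (mycielskiStep hDo hDd n F).1 v ×ˢ (mycielskiStep hDo hDd n F).1 w ⊆ D n := by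
  obtain ⟨hF', hD⟩ := (exists_refinement_pairwise_prod_subset (κ := List.Vector Bool (n + 1))
    List.Vector.tail F.1 (fun v => (F.2 v).1) (fun v => (F.2 v).2) (hDo n) (hDd n)
    (ε := ((n + 1 : ℕ) : ℝ≥0∞)⁻¹) (by simp)).choose_spec
  exact ⟨fun v => (hF' v).2.2, hD⟩

/-- Level `n` is indexed by binary words of length `n`, written newest letter first as in
`PiNat.res`, so that `List.Vector.tail` maps a word to its parent. -/
noncomputable def mycielskiLevel [Nonempty X] :
    (n : ℕ) → {F : List.Vector Bool n → Set X // ∀ v, IsOpen (F v) ∧ (F v).Nonempty}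
  | 0 => ⟨fun _ => univ, fun _ => ⟨isOpen_univ, univ_nonempty⟩⟩
  | n + 1 => mycielskiStep hDo hDd n (mycielskiLevel n)

noncomputable def mycielskiScheme [Nonempty X] (l : List Bool) : Set X :=
  (mycielskiLevel hDo hDd l.length).1 ⟨l, rfl⟩

variable [Nonempty X]

lemma mycielskiScheme_eq {n : ℕ} {l : List Bool} (hl : l.length = n) :
    mycielskiScheme hDo hDd l = (mycielskiLevel hDo hDd n).1 ⟨l, hl⟩ := by
  subst hl; rfl

lemma mycielskiScheme_nonempty (l : List Bool) : (mycielskiScheme hDo hDd l).Nonempty :=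
  ((mycielskiLevel hDo hDd l.length).2 _).2

lemma closureAntitone_mycielskiScheme : ClosureAntitone (mycielskiScheme hDo hDd) :=
  fun l _ => ((mycielskiStep_spec hDo hDd l.length _).1 _).1

lemma ediam_mycielskiScheme_le (l : List Bool) :
    ediam (mycielskiScheme hDo hDd l) ≤ (l.length : ℝ≥0∞)⁻¹ := by
  cases l with
  | nil => simp
  | cons b l => exact ((mycielskiStep_spec hDo hDd l.length _).1 _).2

lemma vanishingDiam_mycielskiScheme : VanishingDiam (mycielskiScheme hDo hDd) := fun x =>
  tendsto_of_tendsto_of_tendsto_of_le_of_le tendsto_const_nhds ENNReal.tendsto_inv_nat_nhds_zero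
    (fun _ => zero_le) fun n => by
      simpa only [res_length] using ediam_mycielskiScheme_le hDo hDd (res x n)

lemma mycielskiScheme_prod_subset {n : ℕ} {l l' : List Bool} (hl : l.length = n + 1)
    (hl' : l'.length = n + 1) (hll' : l ≠ l') :
    mycielskiScheme hDo hDd l ×ˢ mycielskiScheme hDo hDd l' ⊆ D n := by
  rw [mycielskiScheme_eq hDo hDd hl, mycielskiScheme_eq hDo hDd hl']
  exact (mycielskiStep_spec hDo hDd n _).2 fun h => hll' (congrArg Subtype.val h)

end Mycielski

lemma exists_antitone_isOpen_dense_of_mem_residual {X : Type*} [TopologicalSpace X]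
    [BaireSpace X] {s : Set X} (hs : s ∈ residual X) :
    ∃ D : ℕ → Set X, Antitone D ∧ (∀ n, IsOpen (D n)) ∧ (∀ n, Dense (D n)) ∧ ⋂ n, D n ⊆ s := by
  obtain ⟨t, hts, htG, htd⟩ := mem_residual.1 hs
  obtain ⟨U, hUo, rfl⟩ := htG.eq_iInter_nat
  refine ⟨fun n => ⋂ m ∈ Iic n, U m, fun m n hmn => biInter_mono (Iic_subset_Iic.2 hmn)
    fun _ _ => subset_rfl, fun n => (finite_Iic n).isOpen_biInter fun m _ => hUo m,
    fun n => htd.mono (subset_iInter₂ fun m _ => iInter_subset U m), ?_⟩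
  exact (iInter_mono fun n => biInter_subset_of_mem (mem_Iic.2 le_rfl)).trans hts

theorem exists_pairwise_mem_of_mem_residual {X : Type*} [PseudoMetricSpace X] [CompleteSpace X]
    [Nonempty X] {R : Set (X × X)} (hR : R ∈ residual (X × X)) :
    ∃ f : (ℕ → Bool) → X, ∀ s t, s ≠ t → (f s, f t) ∈ R := by
  obtain ⟨D, hDanti, hDo, hDd, hDR⟩ := exists_antitone_isOpen_dense_of_mem_residual hR
  set A := mycielskiScheme hDo hDd
  have hdom : (inducedMap A).1 = univ :=
    (closureAntitone_mycielskiScheme hDo hDd).map_of_vanishingDiam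
      (vanishingDiam_mycielskiScheme hDo hDd) (mycielskiScheme_nonempty hDo hDd)
  refine ⟨fun s => (inducedMap A).2 ⟨s, hdom ▸ mem_univ s⟩, fun s t hst => ?_⟩
  refine hDR (mem_iInter.2 fun m => ?_)
  obtain ⟨k, hk⟩ := Function.ne_iff.1 hst
  have hres : res s (max m k + 1) ≠ res t (max m k + 1) := by
    rw [Ne, res_eq_res]
    exact fun h => hk (h (by omega))
  exact hDanti (le_max_left m k) (mycielskiScheme_prod_subset hDo hDd (res_length _ _)
    (res_length _ _) hres ⟨map_mem _ _, map_mem _ _⟩)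

lemma exists_ne_apply_eq_of_mk_lt_continuum {α : Type*} (f : (ℕ → Bool) → α)
    (hα : Cardinal.mk α < Cardinal.continuum) : ∃ s t, s ≠ t ∧ f s = f t := by
  by_contra! hf
  have hinj : Function.Injective f := fun s t hst => by_contra fun hne => hf s t hne hst
  have hle := Cardinal.lift_mk_le_lift_mk_of_injective hinj
  rw [← Cardinal.power_def, Cardinal.mk_bool, Cardinal.mk_nat, Cardinal.two_power_aleph0,
    Cardinal.lift_continuum, Cardinal.lift_id'] at hle
  exact hle.not_gt hα

section TopologicalGroup

variable {G : Type*} [Group G] [TopologicalSpace G]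

lemma isOpenMap_inv_mul [IsTopologicalGroup G] : IsOpenMap fun p : G × G => p.1⁻¹ * p.2 :=
  isOpenMap_snd.comp (Homeomorph.shearMulRight G).symm.isOpenMap

lemma Subgroup.eq_top_of_mem_residual [SeparatelyContinuousMul G] [BaireSpace G] {N : Subgroup G}
    (hN : (N : Set G) ∈ residual G) : N = ⊤ := by
  refine (Subgroup.eq_top_iff' N).2 fun x => ?_
  have hxN : (x * ·) ⁻¹' (N : Set G) ∈ residual G :=
    tendsto_residual_of_isOpenMap (Homeomorph.mulLeft x).continuous
      (Homeomorph.mulLeft x).isOpenMap hN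
  obtain ⟨y, hy, hxy⟩ := (dense_of_mem_residual (inter_mem hN hxN)).nonempty
  simpa using N.mul_mem hxy (N.inv_mem hy)

end TopologicalGroup

/-- In a Polish group with a comeager conjugacy class, every normal subgroup of index
strictly less than the continuum is the whole group. -/
theorem normal_subgroup_smallIndex_eq_top {G : Type*} [Group G] [TopologicalSpace G]
    [IsTopologicalGroup G] [PolishSpace G]
    (hG : ∃ g : G, {k : G | ∃ h : G, h * g * h⁻¹ = k} ∈ residual G)
    (N : Subgroup G) (hN : N.Normal)
    (hidx : Cardinal.mk (G ⧸ N) < Cardinal.continuum) :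
    N = ⊤ := by
  obtain ⟨g, hg⟩ := hG
  let := TopologicalSpace.upgradeIsCompletelyMetrizable G
  have hC : {k : G | ∃ h : G, h * g * h⁻¹ = k} = conjugatesOf g :=
    Set.ext fun _ => isConj_iff.symm
  rw [hC] at hg
  obtain ⟨f, hf⟩ := exists_pairwise_mem_of_mem_residual
    (tendsto_residual_of_isOpenMap (by fun_prop) isOpenMap_inv_mul hg)
  obtain ⟨s, t, hst, hcoset⟩ :=
    exists_ne_apply_eq_of_mk_lt_continuum (fun s => (f s : G ⧸ N)) hidx
  -- `(f s)⁻¹ * f t` lies both in `N` and in the conjugacy class of `g`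
  have hgN : conjugatesOf g ⊆ N :=
    (hf s t hst).conjugatesOf_eq ▸
      Group.conjugates_subset_normal (tn := hN) (QuotientGroup.eq.1 hcoset)
  exact Subgroup.eq_top_of_mem_residual (mem_of_superset hg hgN)
end

section
/- Let X be a dendrite with center map c and let Y ⊆ X. Then the set c(Y³) = {c(x,y,z) : x, y, z ∈ Y} is c-closed: for all x₁, x₂, x₃ ∈ c(Y³), c(x₁,x₂,x₃) ∈ c(Y³). -/
open Set

/-- An arc from `x` to `y`: for `x = y` it is the singleton, otherwise the range of an
injective path from `x` to `y`. -/
def IsArc {X : Type*} [TopologicalSpace X] (x y : X) (A : Set X) : Prop :=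
  (x = y ∧ A = {x}) ∨ (x ≠ y ∧ ∃ p : Path x y, Function.Injective p ∧ A = Set.range p)

/-- A dendrite: a nonempty compact connected locally connected metrizable space in which
any two points are joined by a unique arc. -/
class Dendrite (X : Type*) [TopologicalSpace X] : Prop where
  nonempty : Nonempty X
  compactSpace : CompactSpace X
  connectedSpace : ConnectedSpace X
  locallyConnectedSpace : LocallyConnectedSpace X
  metrizableSpace : TopologicalSpace.MetrizableSpace X
  existsUnique_arc : ∀ x y : X, ∃! A : Set X, IsArc x y A

/-- The arc `[x,y]` joining two points of a dendrite. -/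
noncomputable def arc {X : Type*} [TopologicalSpace X] [Dendrite X] (x y : X) : Set X :=
  (Dendrite.existsUnique_arc x y).exists.choose

/-- The open arc `]x,y[`. -/
noncomputable def openArc {X : Type*} [TopologicalSpace X] [Dendrite X] (x y : X) : Set X :=
  arc x y \ {x, y}

/-- The order of a point: the number of connected components of its complement. -/
noncomputable def ptOrder {X : Type*} [TopologicalSpace X] (x : X) : Cardinal :=
  Cardinal.mk (ConnectedComponents (({x}ᶜ : Set X)))

def IsEndPoint {X : Type*} [TopologicalSpace X] (x : X) : Prop := ptOrder x = 1

def IsBranchPoint {X : Type*} [TopologicalSpace X] (x : X) : Prop := 3 ≤ ptOrder x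

/-- The set of branch points of `X`. -/
def Br (X : Type*) [TopologicalSpace X] : Set X := {x | IsBranchPoint x}

/-- `x` has order `n ∈ ℕ∞`, where `⊤` stands for infinite order. -/
def HasOrder {X : Type*} [TopologicalSpace X] (x : X) (n : ℕ∞) : Prop :=
  if n = ⊤ then Cardinal.aleph0 ≤ ptOrder x else ptOrder x = (WithTop.untopD 0 n : ℕ)

/-- A Ważewski dendrite of type `S`: every branch point has its order in `S` and for each
`n ∈ S` the set of points of order `n` is arcwise dense. -/
structure IsWazewskiDendrite (X : Type*) [TopologicalSpace X] [Dendrite X] (S : Set ℕ∞) :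
    Prop where
  order_mem : ∀ x : X, IsBranchPoint x → ∃ n ∈ S, HasOrder x n
  arcwiseDense : ∀ n ∈ S, ∀ x y : X, x ≠ y → ∃ z ∈ openArc x y, HasOrder z n

/-- The group structure on the homeomorphism group of `X`. -/
instance homeoGroup {X : Type*} [TopologicalSpace X] : Group (X ≃ₜ X) where
  mul g h := h.trans g
  one := Homeomorph.refl X
  inv := Homeomorph.symm
  mul_assoc _ _ _ := rfl
  one_mul _ := Homeomorph.ext fun _ => rfl
  mul_one _ := Homeomorph.ext fun _ => rfl
  inv_mul_cancel g := Homeomorph.ext fun x => g.symm_apply_apply x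

/-- The compact-open topology on the homeomorphism group of `X`. -/
instance homeoCompactOpen {X : Type*} [TopologicalSpace X] : TopologicalSpace (X ≃ₜ X) :=
  TopologicalSpace.induced (fun g : X ≃ₜ X => (g : C(X, X))) ContinuousMap.compactOpen


/-- The center map of a dendrite: `centerMap x y z` is the unique point of
`[x,y] ∩ [y,z] ∩ [z,x]`. -/
noncomputable def centerMap {X : Type*} [TopologicalSpace X] [Dendrite X] (x y z : X) : X :=
  haveI : Nonempty X := Dendrite.nonempty
  Classical.epsilon fun w => w ∈ arc x y ∧ w ∈ arc y z ∧ w ∈ arc z x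

/-- The image of `Y³` under the center map. -/
noncomputable def centerImage {X : Type*} [TopologicalSpace X] [Dendrite X]
    (Y : Set X) : Set X :=
  {w | ∃ x ∈ Y, ∃ y ∈ Y, ∃ z ∈ Y, w = centerMap x y z}

/-!
Let `m = c(x₁, x₂, x₃)`; if `m` is one of the `xᵢ` there is nothing to prove. Otherwise each
`xᵢ = c(a, b, c)` with `a, b, c ∈ Y` lies on `[a, b]`, so one of `a, b`, call it `uᵢ`, lies on the
same side of `m` as `xᵢ`. As `m ∈ [xᵢ, xⱼ]` separates `xᵢ` from `xⱼ`, it also separates `uᵢ` from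
`uⱼ`; thus `m` lies on all three arcs `[uᵢ, uⱼ]`, i.e. `m = c(u₁, u₂, u₃)`.
-/

open Function unitInterval

namespace Path

variable {X : Type*} [TopologicalSpace X] {x y z : X}

theorem subpath_injective {p : Path x y} (hp : Injective p) {s t : I} (hst : s ≠ t) :
    Injective (p.subpath s t) := by
  intro a b hab
  have hcomb := congrArg Subtype.val (hp hab)
  simp only [Set.Icc.coe_convexComb] at hcomb
  have hst' : (t : ℝ) - s ≠ 0 := sub_ne_zero.mpr fun h => hst (Subtype.ext h.symm)
  exact Subtype.ext (mul_right_cancel₀ hst' (by linear_combination hcomb))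

theorem trans_injective {p : Path x y} {q : Path y z} (hp : Injective p) (hq : Injective q)
    (hpq : range p ∩ range q ⊆ {y}) : Injective (p.trans q) := by
  have cross : ∀ s t : I, (s : ℝ) ≤ 1 / 2 → ¬ (t : ℝ) ≤ 1 / 2 → p.trans q s ≠ p.trans q t := by
    intro s t hs ht heq
    rw [trans_apply, trans_apply, dif_pos hs, dif_neg ht] at heq
    have hy : q _ = q 0 := (hpq ⟨⟨_, heq⟩, ⟨_, rfl⟩⟩).trans q.source.symm
    have := congrArg Subtype.val (hq hy)
    simp only [Set.Icc.coe_zero] at this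
    exact ht (by linarith)
  intro s t hst
  by_cases hs : (s : ℝ) ≤ 1 / 2 <;> by_cases ht : (t : ℝ) ≤ 1 / 2
  · rw [trans_apply, trans_apply, dif_pos hs, dif_pos ht] at hst
    have := congrArg Subtype.val (hp hst)
    exact Subtype.ext (by simpa using this)
  · exact absurd hst (cross s t hs ht)
  · exact absurd hst.symm (cross t s ht hs)
  · rw [trans_apply, trans_apply, dif_neg hs, dif_neg ht] at hst
    have := congrArg Subtype.val (hq hst)
    exact Subtype.ext (by simpa using this)

end Path

namespace Dendrite

variable {X : Type*} [TopologicalSpace X] [Dendrite X]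

theorem isArc_arc (x y : X) : IsArc x y (arc x y) :=
  (existsUnique_arc x y).exists.choose_spec

theorem arc_eq_of_isArc {x y : X} {A : Set X} (h : IsArc x y A) : arc x y = A :=
  (existsUnique_arc x y).unique (isArc_arc x y) h

@[simp]
theorem arc_self (x : X) : arc x x = {x} :=
  arc_eq_of_isArc (Or.inl ⟨rfl, rfl⟩)

theorem exists_injective_path_arc_eq_range {x y : X} (h : x ≠ y) :
    ∃ p : Path x y, Injective p ∧ arc x y = range p := by
  rcases isArc_arc x y with ⟨hxy, -⟩ | ⟨-, hp⟩
  exacts [absurd hxy h, hp]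

theorem arc_eq_image_uIcc {x y : X} {p : Path x y} (hp : Injective p) (s t : I) :
    arc (p s) (p t) = p '' uIcc s t := by
  rcases eq_or_ne s t with rfl | hst
  · simp
  · rw [← Path.range_subpath]
    exact arc_eq_of_isArc (Or.inr ⟨hp.ne hst, _, Path.subpath_injective hp hst, rfl⟩)

theorem arc_comm (x y : X) : arc x y = arc y x := by
  rcases eq_or_ne x y with rfl | hxy
  · rfl
  obtain ⟨p, hp, -⟩ := exists_injective_path_arc_eq_range hxy
  have h01 := arc_eq_image_uIcc hp 0 1
  have h10 := arc_eq_image_uIcc hp 1 0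
  simp only [Path.source, Path.target] at h01 h10
  rw [h01, h10, uIcc_comm]

theorem left_mem_arc (x y : X) : x ∈ arc x y := by
  rcases eq_or_ne x y with rfl | hxy
  · simp
  obtain ⟨p, -, hr⟩ := exists_injective_path_arc_eq_range hxy
  exact hr ▸ ⟨0, p.source⟩

theorem right_mem_arc (x y : X) : y ∈ arc x y :=
  arc_comm y x ▸ left_mem_arc y x

theorem isClosed_arc (x y : X) : IsClosed (arc x y) := by
  have : TopologicalSpace.MetrizableSpace X := metrizableSpace
  rcases eq_or_ne x y with rfl | hxy
  · simp
  obtain ⟨p, -, hr⟩ := exists_injective_path_arc_eq_range hxy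
  exact hr ▸ (isCompact_range p.continuous).isClosed

theorem arc_union_and_inter {x y m : X} (hm : m ∈ arc x y) :
    arc x m ∪ arc m y = arc x y ∧ arc x m ∩ arc m y = {m} := by
  rcases eq_or_ne x y with rfl | hxy
  · obtain rfl : m = x := by simpa using hm
    simp
  obtain ⟨p, hp, hr⟩ := exists_injective_path_arc_eq_range hxy
  obtain ⟨t, rfl⟩ := hr ▸ hm
  have h0 := arc_eq_image_uIcc hp 0 t
  have h1 := arc_eq_image_uIcc hp t 1
  have h01 := arc_eq_image_uIcc hp 0 1
  simp only [Path.source, Path.target] at h0 h1 h01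
  rw [h0, h1, h01, ← image_union, ← image_inter hp]
  simp only [uIcc_of_le nonneg', uIcc_of_le le_one']
  exact ⟨by rw [Icc_union_Icc_eq_Icc nonneg' le_one'],
    by rw [Icc_inter_Icc_eq_singleton nonneg' le_one', image_singleton]⟩

theorem arc_subset_arc_left {x y m : X} (hm : m ∈ arc x y) : arc x m ⊆ arc x y :=
  (arc_union_and_inter hm).1 ▸ subset_union_left

theorem arc_subset_arc_right {x y m : X} (hm : m ∈ arc x y) : arc m y ⊆ arc x y :=
  (arc_union_and_inter hm).1 ▸ subset_union_right

theorem mem_arc_of_inter_subset {x y m : X} (h : arc x m ∩ arc m y ⊆ {m}) : m ∈ arc x y := by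
  rcases eq_or_ne x m with rfl | hxm
  · exact left_mem_arc x y
  rcases eq_or_ne m y with rfl | hmy
  · exact right_mem_arc x m
  have hxy : x ≠ y := by
    rintro rfl
    exact hxm (h ⟨left_mem_arc x m, right_mem_arc m x⟩)
  obtain ⟨p, hp, hpr⟩ := exists_injective_path_arc_eq_range hxm
  obtain ⟨q, hq, hqr⟩ := exists_injective_path_arc_eq_range hmy
  rw [arc_eq_of_isArc (Or.inr ⟨hxy, p.trans q, Path.trans_injective hp hq (hpr ▸ hqr ▸ h), rfl⟩),
    Path.trans_range]
  exact Or.inr ⟨0, q.source⟩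

/-- `a` and `b` lie in the same component of `X \ {m}`. -/
def SameSide (m a b : X) : Prop := ∃ p, p ≠ m ∧ p ∈ arc m a ∧ p ∈ arc m b

theorem not_sameSide_iff {m a b : X} : ¬ SameSide m a b ↔ m ∈ arc a b := by
  constructor
  · intro h
    refine mem_arc_of_inter_subset fun w hw => ?_
    by_contra hwm
    exact h ⟨w, hwm, arc_comm a m ▸ hw.1, hw.2⟩
  · rintro hm ⟨p, hpm, hpa, hpb⟩
    exact hpm ((arc_union_and_inter hm).2.subset ⟨arc_comm m a ▸ hpa, hpb⟩)

theorem SameSide.symm {m a b : X} (h : SameSide m a b) : SameSide m b a :=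
  let ⟨p, hpm, hpa, hpb⟩ := h
  ⟨p, hpm, hpb, hpa⟩

theorem SameSide.trans {m a b c : X} (hab : SameSide m a b) (hbc : SameSide m b c) :
    SameSide m a c := by
  obtain ⟨p, hpm, hpa, hpb⟩ := hab
  obtain ⟨q, hqm, hqb, hqc⟩ := hbc
  rw [← (arc_union_and_inter hpb).1] at hqb
  rcases hqb with hq | hq
  · exact ⟨q, hqm, arc_subset_arc_left hpa hq, hqc⟩
  · have hpq : p ∈ arc m q := mem_arc_of_inter_subset fun w hw =>
      (arc_union_and_inter hpb).2.subset ⟨hw.1, arc_subset_arc_left hq hw.2⟩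
    exact ⟨p, hpm, hpa, arc_subset_arc_left hqc hpq⟩

theorem sameSide_or_sameSide_of_mem_arc {m a b x : X} (hx : x ∈ arc a b) (hxm : x ≠ m) :
    SameSide m x a ∨ SameSide m x b := by
  by_contra! h
  have hm : m ∈ arc a x ∩ arc x b :=
    ⟨arc_comm x a ▸ not_sameSide_iff.mp h.1, not_sameSide_iff.mp h.2⟩
  exact hxm ((arc_union_and_inter hx).2.subset hm).symm

theorem mem_arc_of_sameSide {m a b u v : X} (hm : m ∈ arc a b) (hu : SameSide m a u)
    (hv : SameSide m b v) : m ∈ arc u v :=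
  not_sameSide_iff.mp fun huv => not_sameSide_iff.mpr hm ((hu.trans huv).trans hv.symm)

theorem exists_mem_arc_mem_arc_mem_arc (x y z : X) :
    ∃ m, m ∈ arc x y ∧ m ∈ arc y z ∧ m ∈ arc z x := by
  rcases eq_or_ne x y with rfl | hxy
  · exact ⟨x, left_mem_arc x x, left_mem_arc x z, right_mem_arc z x⟩
  obtain ⟨p, hp, hr⟩ := exists_injective_path_arc_eq_range hxy
  -- the first point of `[x,y]`, travelling from `x`, that lies on `[y,z]`
  obtain ⟨t, ht, ht_min⟩ := ((isClosed_arc y z).preimage p.continuous).isCompact.exists_isLeast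
    ⟨1, by simpa using left_mem_arc y z⟩
  refine ⟨p t, hr ▸ mem_range_self t, ht, arc_comm x z ▸ mem_arc_of_inter_subset ?_⟩
  rintro w ⟨hwx, hwz⟩
  have h0 := arc_eq_image_uIcc hp 0 t
  rw [Path.source, uIcc_of_le nonneg'] at h0
  obtain ⟨s, hs, rfl⟩ := h0 ▸ hwx
  rw [le_antisymm hs.2 (ht_min (arc_subset_arc_right ht hwz))]
  rfl

theorem eq_of_mem_arc_mem_arc_mem_arc {x y z m m' : X}
    (hxy : m ∈ arc x y) (hyz : m ∈ arc y z) (hzx : m ∈ arc z x)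
    (hxy' : m' ∈ arc x y) (hyz' : m' ∈ arc y z) (hzx' : m' ∈ arc z x) : m = m' := by
  by_contra hne
  -- two of `x, y, z` lie on the side of `m` at `m'`, but `m'` separates each pair
  have separates : ∀ {a b}, m' ∈ arc a b → ¬ (SameSide m' m a ∧ SameSide m' m b) :=
    fun hab ⟨ha, hb⟩ => not_sameSide_iff.mpr hab (ha.symm.trans hb)
  have := separates hxy'
  have := separates hyz'
  have := separates hzx'
  have := sameSide_or_sameSide_of_mem_arc hxy hne
  have := sameSide_or_sameSide_of_mem_arc hyz hne
  have := sameSide_or_sameSide_of_mem_arc hzx hne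
  tauto

theorem centerMap_mem (x y z : X) :
    centerMap x y z ∈ arc x y ∧ centerMap x y z ∈ arc y z ∧ centerMap x y z ∈ arc z x :=
  have : Nonempty X := Dendrite.nonempty
  Classical.epsilon_spec (exists_mem_arc_mem_arc_mem_arc x y z)

theorem centerMap_eq {x y z m : X} (hxy : m ∈ arc x y) (hyz : m ∈ arc y z) (hzx : m ∈ arc z x) :
    centerMap x y z = m :=
  let ⟨hxy', hyz', hzx'⟩ := centerMap_mem x y z
  eq_of_mem_arc_mem_arc_mem_arc hxy' hyz' hzx' hxy hyz hzx

theorem exists_mem_sameSide_of_mem_centerImage {Y : Set X} {x m : X} (hx : x ∈ centerImage Y)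
    (hxm : x ≠ m) : ∃ u ∈ Y, SameSide m x u := by
  obtain ⟨a, ha, b, hb, c, -, rfl⟩ := hx
  rcases sameSide_or_sameSide_of_mem_arc (centerMap_mem a b c).1 hxm with h | h
  exacts [⟨a, ha, h⟩, ⟨b, hb, h⟩]

end Dendrite

open Dendrite in
/-- `c(Y³)` is closed under the center map. -/
theorem centerImage_centerClosed {X : Type*} [TopologicalSpace X] [Dendrite X]
    (Y : Set X) :
    ∀ x₁ ∈ centerImage Y, ∀ x₂ ∈ centerImage Y, ∀ x₃ ∈ centerImage Y,
      centerMap x₁ x₂ x₃ ∈ centerImage Y := by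
  intro x₁ h₁ x₂ h₂ x₃ h₃
  set m := centerMap x₁ x₂ x₃
  obtain ⟨m₁₂, m₂₃, m₃₁⟩ := centerMap_mem x₁ x₂ x₃
  by_cases e₁ : x₁ = m
  · exact e₁ ▸ h₁
  by_cases e₂ : x₂ = m
  · exact e₂ ▸ h₂
  by_cases e₃ : x₃ = m
  · exact e₃ ▸ h₃
  obtain ⟨u₁, hu₁, s₁⟩ := exists_mem_sameSide_of_mem_centerImage h₁ e₁
  obtain ⟨u₂, hu₂, s₂⟩ := exists_mem_sameSide_of_mem_centerImage h₂ e₂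
  obtain ⟨u₃, hu₃, s₃⟩ := exists_mem_sameSide_of_mem_centerImage h₃ e₃
  exact ⟨u₁, hu₁, u₂, hu₂, u₃, hu₃, (centerMap_eq (mem_arc_of_sameSide m₁₂ s₁ s₂)
    (mem_arc_of_sameSide m₂₃ s₂ s₃) (mem_arc_of_sameSide m₃₁ s₃ s₁)).symm⟩
end

section
/- Let X be a dendrite, g a homeomorphism of X, and n ≥ 1 a natural number. Then D(g) ⊆ D(gⁿ) and K(gⁿ) ⊆ K(g). -/
open Set

/-- The fixed-point set of a homeomorphism. -/
def fixedSet {X : Type*} [TopologicalSpace X] (g : X ≃ₜ X) : Set X := {x | g x = x}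

/-- The arc `[x,y]` is austro-boreal for `g`: `x ≠ y`, both ends are fixed and no point
of `]x,y[` is fixed. -/
def IsAustroBoreal {X : Type*} [TopologicalSpace X] [Dendrite X] (g : X ≃ₜ X)
    (x y : X) : Prop :=
  x ≠ y ∧ g x = x ∧ g y = y ∧ ∀ z ∈ openArc x y, g z ≠ z

/-- `Dcomp x y` is the connected component of `X \ {x,y}` containing `]x,y[`. -/
noncomputable def Dcomp {X : Type*} [TopologicalSpace X] [Dendrite X] (x y : X) : Set X :=
  ⋃ z ∈ openArc x y, connectedComponentIn ({x, y}ᶜ : Set X) z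

/-- `Dset g` is the union of the `Dcomp x y` over all austro-boreal arcs `[x,y]` of `g`. -/
noncomputable def Dset {X : Type*} [TopologicalSpace X] [Dendrite X] (g : X ≃ₜ X) : Set X :=
  ⋃ (x : X) (y : X) (_ : IsAustroBoreal g x y), Dcomp x y

/-- `Kset g` is the complement of `Dset g`. -/
noncomputable def Kset {X : Type*} [TopologicalSpace X] [Dendrite X] (g : X ≃ₜ X) : Set X :=
  (Dset g)ᶜ

/-!
An austro-boreal arc `[x,y]` of `g` is `g`-invariant. Parametrising it by `[0,1]`, `g` becomes a
continuous self-map of an interval with no fixed point inside, so by the intermediate value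
theorem it pushes every interior point in the same direction; hence no iterate `gⁿ`, `n ≥ 1`, has
a fixed point in `]x,y[` either. Every austro-boreal arc of `g` is thus austro-boreal for `gⁿ`.
-/

open Function Topology

theorem Set.MapsTo.lt_iterate_self {α : Type*} [Preorder α] {s : Set α} {f : α → α}
    (hmaps : MapsTo f s s) (hlt : ∀ t ∈ s, t < f t) {n : ℕ} (hn : n ≠ 0) {t : α}
    (ht : t ∈ s) : t < f^[n] t := by
  induction n with
  | zero => exact absurd rfl hn
  | succ k ih =>
    rw [iterate_succ_apply']
    rcases eq_or_ne k 0 with rfl | hk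
    · exact hlt t ht
    · exact (ih hk).trans (hlt _ (hmaps.iterate k ht))

theorem IsPreconnected.iterate_ne_self {α : Type*} [LinearOrder α] [TopologicalSpace α]
    [OrderClosedTopology α] {s : Set α} (hs : IsPreconnected s) {f : α → α}
    (hf : ContinuousOn f s) (hmaps : MapsTo f s s) (hfix : ∀ t ∈ s, f t ≠ t) {n : ℕ}
    (hn : n ≠ 0) {t : α} (ht : t ∈ s) : f^[n] t ≠ t := by
  have hdir : (∀ t ∈ s, t < f t) ∨ (∀ t ∈ s, f t < t) := by
    by_contra! h
    obtain ⟨⟨a, ha, hfa⟩, b, hb, hfb⟩ := h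
    obtain ⟨c, hc, hfc⟩ := hs.intermediate_value₂ ha hb hf continuousOn_id hfa hfb
    exact hfix c hc hfc
  rcases hdir with hlt | hgt
  · exact (hmaps.lt_iterate_self hlt hn ht).ne'
  · exact (hmaps.lt_iterate_self (α := αᵒᵈ) hgt hn ht).ne'

theorem Topology.IsEmbedding.exists_continuous_semiconj {α X : Type*} [TopologicalSpace α]
    [TopologicalSpace X] {p : α → X} (hp : IsEmbedding p) {g : X → X} (hg : Continuous g)
    (hmaps : MapsTo g (range p) (range p)) : ∃ f : α → α, Continuous f ∧ Semiconj p f g := by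
  choose f hf using fun t => hmaps (mem_range_self t)
  have hsemi : Semiconj p f g := hf
  exact ⟨f, hp.continuous_iff.mpr (by rw [hsemi.comp_eq]; fun_prop), hsemi⟩

theorem homeoGroup_pow_apply {X : Type*} [TopologicalSpace X] (g : X ≃ₜ X) (n : ℕ) (z : X) :
    (g ^ n) z = g^[n] z := by
  induction n generalizing z with
  | zero => rfl
  | succ k ih => exact (ih (g z)).trans (iterate_succ_apply g k z).symm

section Dendrite

variable {X : Type*} [TopologicalSpace X] [Dendrite X]

theorem isArc_arc (x y : X) : IsArc x y (arc x y) :=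
  (Dendrite.existsUnique_arc x y).exists.choose_spec

theorem arc_eq_of_isArc {x y : X} {A : Set X} (h : IsArc x y A) : arc x y = A :=
  (Dendrite.existsUnique_arc x y).unique (isArc_arc x y) h

theorem exists_injective_path_arc_eq_range {x y : X} (hxy : x ≠ y) :
    ∃ p : Path x y, Injective p ∧ arc x y = range p := by
  rcases isArc_arc x y with ⟨h, -⟩ | ⟨-, hp⟩
  · exact absurd h hxy
  · exact hp

theorem image_arc {Y : Type*} [TopologicalSpace Y] [Dendrite Y] {g : X → Y}
    (hg : Continuous g) (hinj : Injective g) (x y : X) : g '' arc x y = arc (g x) (g y) := by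
  refine (arc_eq_of_isArc ?_).symm
  rcases isArc_arc x y with ⟨rfl, hA⟩ | ⟨hxy, p, hp, hA⟩
  · exact Or.inl ⟨rfl, by rw [hA, image_singleton]⟩
  · refine Or.inr ⟨hinj.ne hxy, p.map hg, hinj.comp hp, ?_⟩
    rw [hA, ← range_comp]
    rfl

theorem image_openArc {Y : Type*} [TopologicalSpace Y] [Dendrite Y] {g : X → Y}
    (hg : Continuous g) (hinj : Injective g) (x y : X) :
    g '' openArc x y = openArc (g x) (g y) := by
  rw [openArc, openArc, image_sdiff hinj, image_arc hg hinj, image_pair]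

theorem IsAustroBoreal.pow {g : X ≃ₜ X} {x y : X} (h : IsAustroBoreal g x y) {n : ℕ}
    (hn : n ≠ 0) : IsAustroBoreal (g ^ n) x y := by
  obtain ⟨hxy, hgx, hgy, hfree⟩ := h
  have : TopologicalSpace.MetrizableSpace X := Dendrite.metrizableSpace
  refine ⟨hxy, ?_, ?_, ?_⟩
  · exact (homeoGroup_pow_apply g n x).trans (iterate_fixed hgx n)
  · exact (homeoGroup_pow_apply g n y).trans (iterate_fixed hgy n)
  obtain ⟨p, hp, harc⟩ := exists_injective_path_arc_eq_range hxy
  have hemb : IsEmbedding p := (p.continuous.isClosedEmbedding hp).isEmbedding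
  have hmem : ∀ t, p t ∈ openArc x y ↔ t ∈ Ioo 0 1 := by
    intro t
    have h0 : p t = x ↔ t = 0 := by rw [← hp.eq_iff (b := 0), Path.source]
    have h1 : p t = y ↔ t = 1 := by rw [← hp.eq_iff (b := 1), Path.target]
    rw [openArc, harc, mem_sdiff, mem_Ioo, unitInterval.pos_iff_ne_zero,
      unitInterval.lt_one_iff_ne_one, mem_insert_iff, mem_singleton_iff, h0, h1]
    simp only [mem_range_self, true_and, not_or]
  have hmaps_arc : MapsTo g (arc x y) (arc x y) := by
    rw [mapsTo_iff_image_subset, image_arc g.continuous g.injective, hgx, hgy]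
  have hmaps_openArc : MapsTo g (openArc x y) (openArc x y) := by
    rw [mapsTo_iff_image_subset, image_openArc g.continuous g.injective, hgx, hgy]
  obtain ⟨f, hf, hsemi⟩ := hemb.exists_continuous_semiconj g.continuous (harc ▸ hmaps_arc)
  have hf_maps : MapsTo f (Ioo 0 1) (Ioo 0 1) := fun t ht => by
    rw [← hmem, hsemi.eq]; exact hmaps_openArc ((hmem t).mpr ht)
  have hf_free : ∀ t ∈ Ioo 0 1, f t ≠ t := fun t ht hft =>
    hfree (p t) ((hmem t).mpr ht) (by rw [← hsemi.eq, hft])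
  intro z hz
  obtain ⟨t, rfl⟩ : z ∈ range p := harc ▸ hz.1
  have ht := (hmem t).mp hz
  rw [homeoGroup_pow_apply, ← (hsemi.iterate_right n).eq, hp.ne_iff]
  exact isPreconnected_Ioo.iterate_ne_self hf.continuousOn hf_maps hf_free hn ht

end Dendrite

/-- For `n ≥ 1`, `D(g) ⊆ D(gⁿ)` and `K(gⁿ) ⊆ K(g)`. -/
theorem Dset_subset_Dset_pow {X : Type*} [TopologicalSpace X] [Dendrite X]
    (g : X ≃ₜ X) (n : ℕ) (hn : 1 ≤ n) :
    Dset g ⊆ Dset (g ^ n) ∧ Kset (g ^ n) ⊆ Kset g := by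
  replace hn : n ≠ 0 := Nat.one_le_iff_ne_zero.mp hn
  have hD : Dset g ⊆ Dset (g ^ n) := iUnion₂_mono fun x y =>
    iUnion_subset fun h => subset_iUnion_of_subset (h.pow hn) subset_rfl
  exact ⟨hD, compl_subset_compl.mpr hD⟩
end
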